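/- Let u : U → ℝ be C³ on open U ⊆ ℝⁿ with |∇u| ≡ 1, set k = -Δu, and let f be a C¹ real function that is nonnegative and nonincreasing on the range of k, with k ≥ 0 on U. Then div(f(k)∇u) = f'(k)⟨∇u, ∇k⟩ - f(k)·k = f'(k)|D²u|² - f(k)k ≤ 0 pointwise on U. -/

import Mathlib

noncomputable def pd (n : ℕ) (i : Fin n) (f : EuclideanSpace ℝ (Fin n) → ℝ)
    (x : EuclideanSpace ℝ (Fin n)) : ℝ :=
  fderiv ℝ f x (EuclideanSpace.single i 1)

/-!
Differentiating `|∇u|² = 1` twice gives `∑ⱼ uⱼ uⱼᵢᵢ = -∑ⱼ uᵢⱼ²`; commuting the third derivatives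
in `⟨∇u, ∇k⟩ = -∑ᵢⱼ uᵢ uⱼⱼᵢ` therefore yields `⟨∇u, ∇k⟩ = |D²u|²`. The product and chain rules give
`div (f(k) ∇u) = f'(k) ⟨∇u, ∇k⟩ - f(k) k`, and both terms are `≤ 0` by the sign assumptions.
-/

open Filter Topology

section PartialDerivative

variable {n : ℕ} {g h : EuclideanSpace ℝ (Fin n) → ℝ} {x : EuclideanSpace ℝ (Fin n)}

theorem contDiffAt_pd {m p : WithTop ℕ∞} (hg : ContDiffAt ℝ p g x) (hmp : m + 1 ≤ p)
    (i : Fin n) : ContDiffAt ℝ m (pd n i g) x :=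
  (hg.fderiv_right hmp).clm_apply contDiffAt_const

theorem differentiableAt_pd (hg : ContDiffAt ℝ 2 g x) (i : Fin n) :
    DifferentiableAt ℝ (pd n i g) x :=
  (contDiffAt_pd hg (m := 1) (by norm_num) i).differentiableAt one_ne_zero

theorem differentiableAt_pd_pd (hg : ContDiffAt ℝ 3 g x) (i j : Fin n) :
    DifferentiableAt ℝ (pd n i (pd n j g)) x :=
  differentiableAt_pd (contDiffAt_pd hg (by norm_num) j) i

theorem pd_congr_of_eventuallyEq (hgh : g =ᶠ[𝓝 x] h) (i : Fin n) :
    pd n i g x = pd n i h x := by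
  simp only [pd, hgh.fderiv_eq]

theorem pd_eq_zero_of_eventuallyEq_const {c : ℝ} (hg : g =ᶠ[𝓝 x] fun _ => c) (i : Fin n) :
    pd n i g x = 0 := by
  rw [pd_congr_of_eventuallyEq hg]
  simp [pd]

theorem pd_neg (i : Fin n) : pd n i (fun y => -g y) x = -pd n i g x := by
  simp [pd, fderiv_fun_neg]

theorem pd_mul (hg : DifferentiableAt ℝ g x) (hh : DifferentiableAt ℝ h x) (i : Fin n) :
    pd n i (fun y => g y * h y) x = g x * pd n i h x + h x * pd n i g x := by
  simp [pd, fderiv_fun_mul hg hh]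

theorem pd_sum {ι : Type*} (s : Finset ι) {A : ι → EuclideanSpace ℝ (Fin n) → ℝ}
    (hA : ∀ j ∈ s, DifferentiableAt ℝ (A j) x) (i : Fin n) :
    pd n i (fun y => ∑ j ∈ s, A j y) x = ∑ j ∈ s, pd n i (A j) x := by
  simp [pd, fderiv_fun_sum hA]

theorem pd_comp {f : ℝ → ℝ} (hf : DifferentiableAt ℝ f (g x)) (hg : DifferentiableAt ℝ g x)
    (i : Fin n) : pd n i (fun y => f (g y)) x = deriv f (g x) * pd n i g x := by
  change fderiv ℝ (f ∘ g) x _ = _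
  simp [(hf.hasDerivAt.comp_hasFDerivAt x hg.hasFDerivAt).fderiv, pd]

theorem pd_sq (hg : DifferentiableAt ℝ g x) (i : Fin n) :
    pd n i (fun y => g y ^ 2) x = 2 * (g x * pd n i g x) := by
  simp only [sq, pd_mul hg hg]
  ring

theorem pd_comm (hg : ContDiffAt ℝ 2 g x) (i j : Fin n) :
    pd n i (pd n j g) x = pd n j (pd n i g) x := by
  have hd : DifferentiableAt ℝ (fderiv ℝ g) x :=
    (hg.fderiv_right (m := 1) le_rfl).differentiableAt one_ne_zero
  have hpd : ∀ v w, fderiv ℝ (fun y => fderiv ℝ g y v) x w = fderiv ℝ (fderiv ℝ g) x w v :=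
    fun v w => by simp [fderiv_clm_apply hd (differentiableAt_const v)]
  have hsymm := hg.isSymmSndFDerivAt (by simp [minSmoothness_of_isRCLikeNormedField])
  unfold pd
  rw [hpd, hsymm, ← hpd]

theorem pd_pd_pd_rotate (hg : ContDiffAt ℝ 3 g x) (i j l : Fin n) :
    pd n i (pd n j (pd n l g)) x = pd n j (pd n l (pd n i g)) x := by
  have hcomm : pd n i (pd n l g) =ᶠ[𝓝 x] pd n l (pd n i g) :=
    (hg.eventually (by simp)).mono fun y hy => pd_comm (hy.of_le (by norm_num)) i l
  rw [pd_comm (contDiffAt_pd hg (by norm_num) l) i j, pd_congr_of_eventuallyEq hcomm]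

end PartialDerivative

section Eikonal

variable {n : ℕ} {u : EuclideanSpace ℝ (Fin n) → ℝ} {x : EuclideanSpace ℝ (Fin n)} {c : ℝ}

theorem sum_pd_mul_pd_pd_eq_zero_of_eikonal (hu : ContDiffAt ℝ 2 u x)
    (heik : ∀ᶠ y in 𝓝 x, ∑ j, pd n j u y ^ 2 = c) (i : Fin n) :
    ∑ j, pd n j u x * pd n i (pd n j u) x = 0 := by
  have hdu := differentiableAt_pd hu
  have hzero := pd_eq_zero_of_eventuallyEq_const heik i
  rw [pd_sum (A := fun j y => pd n j u y ^ 2) _ (fun j _ => (hdu j).pow 2)] at hzero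
  simp only [pd_sq (hdu _), ← Finset.mul_sum] at hzero
  linarith

theorem sum_pd_mul_pd_pd_pd_eq_of_eikonal (hu : ContDiffAt ℝ 3 u x)
    (heik : ∀ᶠ y in 𝓝 x, ∑ j, pd n j u y ^ 2 = c) (i : Fin n) :
    ∑ j, pd n j u x * pd n i (pd n i (pd n j u)) x = -∑ j, pd n i (pd n j u) x ^ 2 := by
  have hG : ∀ᶠ y in 𝓝 x, ∑ j, pd n j u y * pd n i (pd n j u) y = 0 := by
    filter_upwards [heik.eventually_nhds, hu.eventually (by simp)] with y hy hu3
    exact sum_pd_mul_pd_pd_eq_zero_of_eikonal (hu3.of_le (by norm_num)) hy i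
  have hd1 := differentiableAt_pd (hu.of_le (by norm_num))
  have hd2 := differentiableAt_pd_pd hu i
  have hzero := pd_eq_zero_of_eventuallyEq_const hG i
  rw [pd_sum (A := fun j y => pd n j u y * pd n i (pd n j u) y) _
    (fun j _ => (hd1 j).mul (hd2 j))] at hzero
  simp only [pd_mul (hd1 _) (hd2 _), Finset.sum_add_distrib, ← sq] at hzero
  linarith

theorem sum_pd_mul_pd_neg_laplacian_of_eikonal (hu : ContDiffAt ℝ 3 u x)
    (heik : ∀ᶠ y in 𝓝 x, ∑ j, pd n j u y ^ 2 = c) :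
    ∑ i, pd n i u x * pd n i (fun y => -∑ j, pd n j (pd n j u) y) x =
      ∑ i, ∑ j, pd n i (pd n j u) x ^ 2 := by
  calc ∑ i, pd n i u x * pd n i (fun y => -∑ j, pd n j (pd n j u) y) x
      = -∑ i, ∑ j, pd n i u x * pd n i (pd n j (pd n j u)) x := by
        simp only [pd_neg, pd_sum _ (fun j _ => differentiableAt_pd_pd hu j j), mul_neg,
          Finset.mul_sum, Finset.sum_neg_distrib]
    _ = -∑ j, ∑ i, pd n i u x * pd n j (pd n j (pd n i u)) x := by
        rw [Finset.sum_comm]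
        congr! 3 with j _ i _
        rw [pd_pd_pd_rotate hu i j j]
    _ = ∑ j, ∑ i, pd n j (pd n i u) x ^ 2 := by
        simp only [sum_pd_mul_pd_pd_pd_eq_of_eikonal hu heik, Finset.sum_neg_distrib, neg_neg]

end Eikonal

theorem sum_pd_comp_mul_pd {n : ℕ} {u k : EuclideanSpace ℝ (Fin n) → ℝ}
    {x : EuclideanSpace ℝ (Fin n)} {f : ℝ → ℝ} (hf : DifferentiableAt ℝ f (k x))
    (hk : DifferentiableAt ℝ k x) (hu : ∀ i, DifferentiableAt ℝ (pd n i u) x) :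
    ∑ i, pd n i (fun y => f (k y) * pd n i u y) x =
      deriv f (k x) * ∑ i, pd n i u x * pd n i k x + f (k x) * ∑ i, pd n i (pd n i u) x := by
  have hterm : ∀ i, pd n i (fun y => f (k y) * pd n i u y) x =
      deriv f (k x) * (pd n i u x * pd n i k x) + f (k x) * pd n i (pd n i u) x := fun i => by
    rw [pd_mul (g := fun y => f (k y)) (hf.comp x hk) (hu i), pd_comp hf hk]
    ring
  simp only [hterm, Finset.sum_add_distrib, Finset.mul_sum]

theorem stmt_15 (n : ℕ) (U : Set (EuclideanSpace ℝ (Fin n))) (hU : IsOpen U)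
    (u : EuclideanSpace ℝ (Fin n) → ℝ) (hu : ContDiffOn ℝ 3 u U)
    (heik : ∀ x ∈ U, (∑ i, (pd n i u x) ^ 2) = 1)
    (k : EuclideanSpace ℝ (Fin n) → ℝ)
    (hk : k = fun x => -(∑ i, pd n i (pd n i u) x))
    (hknn : ∀ x ∈ U, 0 ≤ k x)
    (f : ℝ → ℝ) (hf : ContDiff ℝ 1 f)
    (hfnn : ∀ x ∈ U, 0 ≤ f (k x))
    (hfmono : ∀ x ∈ U, deriv f (k x) ≤ 0) :
    ∀ x ∈ U,
      (∑ i, pd n i (fun y => f (k y) * pd n i u y) x) =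
          deriv f (k x) * (∑ i, pd n i u x * pd n i k x) - f (k x) * k x ∧
      (∑ i, pd n i (fun y => f (k y) * pd n i u y) x) =
          deriv f (k x) * (∑ i, ∑ j, (pd n i (pd n j u) x) ^ 2) - f (k x) * k x ∧
      (∑ i, pd n i (fun y => f (k y) * pd n i u y) x) ≤ 0 := by
  intro x hx
  have hux : ContDiffAt ℝ 3 u x := hu.contDiffAt (hU.mem_nhds hx)
  have heikx : ∀ᶠ y in 𝓝 x, ∑ i, pd n i u y ^ 2 = 1 := eventually_of_mem (hU.mem_nhds hx) heik
  have hkx : k x = -∑ i, pd n i (pd n i u) x := by rw [hk]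
  have hkd : DifferentiableAt ℝ k x := by
    rw [hk]
    exact (DifferentiableAt.fun_sum fun i _ => differentiableAt_pd_pd hux i i).neg
  have hdiv : ∑ i, pd n i (fun y => f (k y) * pd n i u y) x =
      deriv f (k x) * ∑ i, pd n i u x * pd n i k x - f (k x) * k x := by
    rw [sum_pd_comp_mul_pd (hf.differentiable one_ne_zero _) hkd
      (differentiableAt_pd (hux.of_le (by norm_num)))]
    linear_combination f (k x) * hkx
  have hbochner : ∑ i, pd n i u x * pd n i k x = ∑ i, ∑ j, pd n i (pd n j u) x ^ 2 := by
    rw [hk]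
    exact sum_pd_mul_pd_neg_laplacian_of_eikonal hux heikx
  have hhess : 0 ≤ ∑ i, ∑ j, pd n i (pd n j u) x ^ 2 := by positivity
  refine ⟨hdiv, hbochner ▸ hdiv, ?_⟩
  rw [hdiv, hbochner, sub_nonpos]
  exact (mul_nonpos_of_nonpos_of_nonneg (hfmono x hx) hhess).trans
    (mul_nonneg (hfnn x hx) (hknn x hx))
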